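/- arXiv:2012.13008 — 6 statements merged into one kernel-verified Lean document; each statement's English description precedes it below -/
import Mathlib

section
/- Let m > 0, E ∈ ℝ with |E| < m, and v > 0. Let f : ℝ → ℝ be continuous, non-positive, and not identically zero on [0,∞). Let φ : ℝ → ℝ be a twice continuously differentiable even function with φ(x) > 0 for all x ≥ 0, satisfying the Klein–Gordon equation φ''(x) = [m² − (E − v f(x))²] φ(x) for all x ≥ 0, normalized so that ∫₀^∞ φ(x)² dx = 1/2, with φ(x)φ'(x) → 0 as x → ∞, φ'(0) = 0, and such that the functions (φ')², f φ², and f² φ² are integrable on (0,∞). Then E ∫₀^∞ f(x) φ(x)² dx < v ∫₀^∞ f(x)² φ(x)² dx. -/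
/-! Multiply the Klein–Gordon equation by `φ` and integrate over `(0, ∞)`. Integration by parts,
with the boundary terms killed by `φ'(0) = 0` and `φ φ' → 0`, turns the left side into
`-∫ φ'² ≤ 0`, while the right side is `(m² - E²) ∫ φ² + 2 E v ∫ f φ² - v² ∫ f² φ²` with
`(m² - E²) ∫ φ² > 0`. Hence `2 E ∫ f φ² < v ∫ f² φ²`, which gives the claim whatever the
sign of `E ∫ f φ²`. -/

open MeasureTheory Filter Set
open scoped Topology

theorem integral_Ioi_mul_deriv_deriv {φ : ℝ → ℝ} {a : ℝ} (hφ : ContDiff ℝ 2 φ)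
    (hlim : Tendsto (fun x => φ x * deriv φ x) atTop (𝓝 0))
    (hφ' : IntegrableOn (fun x => deriv φ x ^ 2) (Ioi a))
    (hφφ'' : IntegrableOn (fun x => φ x * deriv (deriv φ) x) (Ioi a)) :
    ∫ x in Ioi a, φ x * deriv (deriv φ) x = -(φ a * deriv φ a) - ∫ x in Ioi a, deriv φ x ^ 2 := by
  have hd : Differentiable ℝ φ := hφ.differentiable (by norm_num)
  have hd' : Differentiable ℝ (deriv φ) := hφ.differentiable_deriv_two
  have hcont : Tendsto (φ * deriv φ) (𝓝[>] a) (𝓝 (φ a * deriv φ a)) :=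
    ((hd.continuous.mul hd'.continuous).tendsto a).mono_left nhdsWithin_le_nhds
  rw [integral_Ioi_mul_deriv_eq_deriv_mul (fun x _ => (hd x).hasDerivAt)
    (fun x _ => (hd' x).hasDerivAt) hφφ'' (by simpa only [sq, Pi.mul_def] using hφ') hcont hlim,
    zero_sub]
  simp only [sq]

theorem integral_mul_deriv_deriv_of_kleinGordon {m E v : ℝ} {f φ : ℝ → ℝ} {s : Set ℝ}
    (hs : MeasurableSet s)
    (hKG : ∀ x ∈ s, deriv (deriv φ) x = (m ^ 2 - (E - v * f x) ^ 2) * φ x)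
    (h0 : IntegrableOn (fun x => φ x ^ 2) s)
    (h1 : IntegrableOn (fun x => f x * φ x ^ 2) s)
    (h2 : IntegrableOn (fun x => f x ^ 2 * φ x ^ 2) s) :
    IntegrableOn (fun x => φ x * deriv (deriv φ) x) s ∧
      ∫ x in s, φ x * deriv (deriv φ) x =
        (m ^ 2 - E ^ 2) * (∫ x in s, φ x ^ 2) + 2 * E * v * (∫ x in s, f x * φ x ^ 2)
          - v ^ 2 * ∫ x in s, f x ^ 2 * φ x ^ 2 := by
  have hpt : EqOn (fun x => φ x * deriv (deriv φ) x)
      (fun x => (m ^ 2 - E ^ 2) * φ x ^ 2 + 2 * E * v * (f x * φ x ^ 2)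
        - v ^ 2 * (f x ^ 2 * φ x ^ 2)) s := fun x hx => by
    simp only [hKG x hx]
    ring
  have hsum : IntegrableOn (fun x => (m ^ 2 - E ^ 2) * φ x ^ 2 + 2 * E * v * (f x * φ x ^ 2)) s :=
    (h0.const_mul _).add (h1.const_mul _)
  refine ⟨(hsum.sub (h2.const_mul _)).congr_fun hpt.symm hs, ?_⟩
  rw [setIntegral_congr_fun hs hpt, integral_sub hsum (h2.const_mul _),
    integral_add (h0.const_mul _) (h1.const_mul _), integral_const_mul, integral_const_mul,
    integral_const_mul]

theorem kleinGordon_coupling_inequality_general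
    (m E v : ℝ) (hE : |E| < m) (hv : 0 < v)
    (f : ℝ → ℝ)
    (φ : ℝ → ℝ) (hφ_smooth : ContDiff ℝ 2 φ)
    (hKG : ∀ x ≥ (0:ℝ), deriv (deriv φ) x = (m ^ 2 - (E - v * f x) ^ 2) * φ x)
    (hnorm : ∫ x in Ioi (0:ℝ), φ x ^ 2 = 1 / 2)
    (hlim : Tendsto (fun x => φ x * deriv φ x) atTop (𝓝 0))
    (hφ'0 : deriv φ 0 = 0)
    (hint1 : IntegrableOn (fun x => (deriv φ x) ^ 2) (Ioi 0))
    (hint2 : IntegrableOn (fun x => f x * φ x ^ 2) (Ioi 0))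
    (hint3 : IntegrableOn (fun x => f x ^ 2 * φ x ^ 2) (Ioi 0)) :
    E * ∫ x in Ioi (0:ℝ), f x * φ x ^ 2 < v * ∫ x in Ioi (0:ℝ), f x ^ 2 * φ x ^ 2 := by
  have hint0 : IntegrableOn (fun x => φ x ^ 2) (Ioi 0) := by
    by_contra h
    rw [integral_undef h] at hnorm
    norm_num at hnorm
  obtain ⟨hφφ'', hφφ''_eq⟩ := integral_mul_deriv_deriv_of_kleinGordon measurableSet_Ioi
    (fun x hx => hKG x (le_of_lt hx)) hint0 hint2 hint3
  have hIBP := integral_Ioi_mul_deriv_deriv hφ_smooth hlim hint1 hφφ''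
  rw [hφφ''_eq, hnorm, hφ'0, mul_zero, neg_zero, zero_sub] at hIBP
  have hφ'_sq : 0 ≤ ∫ x in Ioi (0:ℝ), deriv φ x ^ 2 :=
    setIntegral_nonneg measurableSet_Ioi fun x _ => sq_nonneg _
  have hfφ_sq : 0 ≤ ∫ x in Ioi (0:ℝ), f x ^ 2 * φ x ^ 2 :=
    setIntegral_nonneg measurableSet_Ioi fun x _ => by positivity
  have hE2 : E ^ 2 < m ^ 2 := by nlinarith [abs_nonneg E, sq_abs E]
  have hvirial : 2 * E * ∫ x in Ioi (0:ℝ), f x * φ x ^ 2 <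
      v * ∫ x in Ioi (0:ℝ), f x ^ 2 * φ x ^ 2 :=
    lt_of_mul_lt_mul_left (by nlinarith) hv.le
  nlinarith [mul_nonneg hv.le hfφ_sq]

/-- for a normalized even positive solution of the one-dimensional
Klein--Gordon equation `φ'' = (m² − (E − v f)²) φ` with `|E| < m`, one has
`E ∫₀^∞ f φ² < v ∫₀^∞ f² φ²`. -/
theorem kleinGordon_coupling_inequality
    (m E v : ℝ) (hm : 0 < m) (hE : |E| < m) (hv : 0 < v)
    (f : ℝ → ℝ) (hf_cont : Continuous f)
    (hf_nonpos : ∀ x ≥ (0:ℝ), f x ≤ 0)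
    (hf_ne : ∃ x ≥ (0:ℝ), f x ≠ 0)
    (φ : ℝ → ℝ) (hφ_smooth : ContDiff ℝ 2 φ)
    (hφ_even : ∀ x, φ (-x) = φ x)
    (hφ_pos : ∀ x ≥ (0:ℝ), 0 < φ x)
    (hKG : ∀ x ≥ (0:ℝ), deriv (deriv φ) x = (m ^ 2 - (E - v * f x) ^ 2) * φ x)
    (hnorm : ∫ x in Ioi (0:ℝ), φ x ^ 2 = 1 / 2)
    (hlim : Tendsto (fun x => φ x * deriv φ x) atTop (𝓝 0))
    (hφ'0 : deriv φ 0 = 0)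
    (hint1 : IntegrableOn (fun x => (deriv φ x) ^ 2) (Ioi 0))
    (hint2 : IntegrableOn (fun x => f x * φ x ^ 2) (Ioi 0))
    (hint3 : IntegrableOn (fun x => f x ^ 2 * φ x ^ 2) (Ioi 0)) :
    E * ∫ x in Ioi (0:ℝ), f x * φ x ^ 2 < v * ∫ x in Ioi (0:ℝ), f x ^ 2 * φ x ^ 2 :=
  kleinGordon_coupling_inequality_general m E v hE hv f φ hφ_smooth hKG hnorm hlim hφ'0 hint1 hint2
    hint3
end

section
/- Let m > 0, E ∈ ℝ with |E| < m, and v > 0. Let f : ℝ → ℝ be continuous, even, non-positive, monotone non-decreasing on [0,∞), with f(x) → 0 as x → ∞. Let φ : ℝ → ℝ be a twice continuously differentiable even function with φ(x) > 0 for all x ≥ 0, φ'(0) = 0, φ(x) → 0 as x → ∞, satisfying the Klein–Gordon equation φ''(x) = [m² − (E − v f(x))²] φ(x) for all x ≥ 0, and such that v f(x) ≤ E for all x ≥ 0. Then φ'(x) ≤ 0 for all x ∈ [0,∞), i.e., φ is non-increasing on [0,∞). -/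
/-!
Write `W x = m² − (E − v f x)²`, so that `φ'' = W φ`. Since `0 ≤ E − v f` decreases on `[0, ∞)`,
`W` increases there, and `φ''` has the sign of `W` because `φ > 0`. If `φ'(x₀) > 0`, then either
`W(x₀) < 0`, so `φ'' ≤ 0` on `[0, x₀]` and `φ'(x₀) ≤ φ'(0) = 0`; or `W(x₀) ≥ 0`, so `φ'` increases on
`[x₀, ∞)`, `φ` increases strictly there, and `φ` cannot tend to `0 < φ(x₀)`.
-/

open Filter Set
open scoped Topology

theorem monotoneOn_const_sub_sq {g : ℝ → ℝ} {s : Set ℝ} (c : ℝ) (hg : AntitoneOn g s)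
    (hg_nonneg : ∀ x ∈ s, 0 ≤ g x) : MonotoneOn (fun x => c - g x ^ 2) s :=
  fun _ hx _ hy hxy => sub_le_sub_left (pow_le_pow_left₀ (hg_nonneg _ hy) (hg hx hy hxy) 2) c

theorem deriv_nonpos_of_monotoneOn_deriv {φ : ℝ → ℝ} {a L : ℝ} (hφ : Differentiable ℝ φ)
    (hφ' : MonotoneOn (deriv φ) (Ici a)) (hlim : Tendsto φ atTop (𝓝 L)) (hL : L ≤ φ a) :
    deriv φ a ≤ 0 := by
  by_contra! hpos
  have hstrict : StrictMonoOn φ (Ici a) := by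
    refine strictMonoOn_of_deriv_pos (convex_Ici a) hφ.continuous.continuousOn fun x hx => ?_
    rw [interior_Ici] at hx
    exact hpos.trans_le (hφ' self_mem_Ici (mem_Ici.2 hx.le) hx.le)
  have hlt : φ a < φ (a + 1) := hstrict self_mem_Ici (mem_Ici.2 (by linarith)) (by linarith)
  have hle : φ (a + 1) ≤ L :=
    ge_of_tendsto hlim <| eventually_atTop.2
      ⟨a + 1, fun x hx => hstrict.monotoneOn (mem_Ici.2 (by linarith)) (mem_Ici.2 (by linarith)) hx⟩
  linarith

theorem deriv_nonpos_of_deriv_deriv_eq_mul {φ W : ℝ → ℝ} {a : ℝ} (hφ : Differentiable ℝ φ)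
    (hφ' : Differentiable ℝ (deriv φ)) (hW : MonotoneOn W (Ici a))
    (hφ'' : ∀ x ≥ a, deriv (deriv φ) x = W x * φ x) (hφ_nonneg : ∀ x ≥ a, 0 ≤ φ x)
    (hφ'a : deriv φ a = 0) (hφ_lim : Tendsto φ atTop (𝓝 0)) :
    ∀ x ≥ a, deriv φ x ≤ 0 := by
  intro x₀ hx₀
  rcases lt_or_ge (W x₀) 0 with hneg | hnonneg
  · have hanti : AntitoneOn (deriv φ) (Icc a x₀) := by
      refine antitoneOn_of_deriv_nonpos (convex_Icc a x₀) hφ'.continuous.continuousOn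
        hφ'.differentiableOn fun x hx => ?_
      rw [interior_Icc] at hx
      have hWx : W x ≤ 0 := (hW (mem_Ici.2 hx.1.le) hx₀ hx.2.le).trans hneg.le
      rw [hφ'' x hx.1.le]
      exact mul_nonpos_of_nonpos_of_nonneg hWx (hφ_nonneg x hx.1.le)
    simpa [hφ'a] using hanti (left_mem_Icc.2 hx₀) (right_mem_Icc.2 hx₀) hx₀
  · refine deriv_nonpos_of_monotoneOn_deriv hφ ?_ hφ_lim (hφ_nonneg x₀ hx₀)
    refine monotoneOn_of_deriv_nonneg (convex_Ici x₀) hφ'.continuous.continuousOn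
      hφ'.differentiableOn fun x hx => ?_
    rw [interior_Ici] at hx
    have hxa : a ≤ x := hx₀.trans hx.le
    rw [hφ'' x hxa]
    exact mul_nonneg (hnonneg.trans (hW hx₀ hxa hx.le)) (hφ_nonneg x hxa)

theorem kleinGordon_groundState_monotone_general
    (m E v : ℝ) (hv : 0 < v)
    (f : ℝ → ℝ)
    (hf_mono : MonotoneOn f (Ici 0))
    (φ : ℝ → ℝ) (hφ_smooth : ContDiff ℝ 2 φ)
    (hφ_pos : ∀ x ≥ (0:ℝ), 0 < φ x)
    (hφ'0 : deriv φ 0 = 0)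
    (hφ_lim : Tendsto φ atTop (𝓝 0))
    (hKG : ∀ x ≥ (0:ℝ), deriv (deriv φ) x = (m ^ 2 - (E - v * f x) ^ 2) * φ x)
    (hfE : ∀ x ≥ (0:ℝ), v * f x ≤ E) :
    ∀ x ≥ (0:ℝ), deriv φ x ≤ 0 := by
  have hφ' : Differentiable ℝ (deriv φ) := by
    simpa [iteratedDeriv_one] using hφ_smooth.differentiable_iteratedDeriv 1 (by norm_num)
  have hW : MonotoneOn (fun x => m ^ 2 - (E - v * f x) ^ 2) (Ici 0) :=
    monotoneOn_const_sub_sq _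
      (fun _ hx _ hy hxy => sub_le_sub_left (mul_le_mul_of_nonneg_left (hf_mono hx hy hxy) hv.le) E)
      (fun x hx => sub_nonneg.2 (hfE x hx))
  exact deriv_nonpos_of_deriv_deriv_eq_mul (hφ_smooth.differentiable (by norm_num)) hφ' hW hKG
    (fun x hx => (hφ_pos x hx).le) hφ'0 hφ_lim

/-- the even, positive ground state of the one-dimensional Klein--Gordon
equation `φ'' = (m² − (E − v f)²) φ` is non-increasing on `[0, ∞)`. -/
theorem kleinGordon_groundState_monotone
    (m E v : ℝ) (hm : 0 < m) (hE : |E| < m) (hv : 0 < v)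
    (f : ℝ → ℝ) (hf_cont : Continuous f)
    (hf_even : ∀ x, f (-x) = f x)
    (hf_nonpos : ∀ x, f x ≤ 0)
    (hf_mono : MonotoneOn f (Ici 0))
    (hf_lim : Tendsto f atTop (𝓝 0))
    (φ : ℝ → ℝ) (hφ_smooth : ContDiff ℝ 2 φ)
    (hφ_even : ∀ x, φ (-x) = φ x)
    (hφ_pos : ∀ x ≥ (0:ℝ), 0 < φ x)
    (hφ'0 : deriv φ 0 = 0)
    (hφ_lim : Tendsto φ atTop (𝓝 0))
    (hKG : ∀ x ≥ (0:ℝ), deriv (deriv φ) x = (m ^ 2 - (E - v * f x) ^ 2) * φ x)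
    (hfE : ∀ x ≥ (0:ℝ), v * f x ≤ E) :
    ∀ x ≥ (0:ℝ), deriv φ x ≤ 0 :=
  kleinGordon_groundState_monotone_general m E v hv f hf_mono φ hφ_smooth hφ_pos hφ'0 hφ_lim hKG hfE
end

section
/- Let d ≥ 2 be an integer, m > 0, E ∈ ℝ with |E| < m, and v > 0. Let f belong to class P_d. Let R : (0,∞) → ℝ be a twice continuously differentiable, strictly positive function satisfying the radial Klein–Gordon equation with angular momentum l = 0, namely R''(r) + ((d−1)/r) R'(r) = [m² − (E − v f(r))²] R(r) for all r > 0, with r^{d−1} R'(r) → 0 as r → 0⁺, R(r) → 0 as r → ∞, and such that v f(r) ≤ E for all r > 0. Then R'(r) ≤ 0 for all r ∈ (0,∞), i.e., R is non-increasing on (0,∞). -/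
/-!
The flux `g(r) = r^{d-1} R'(r)` satisfies `g' = r^{d-1} k R` with `k = m² - (E - v f)²`, and `k` is
non-decreasing because `0 ≤ E - v f` is non-increasing. Suppose `R'(s) > 0`. If `k(s) < 0`, then
`g' ≤ 0` on `(0, s]`, so `g(s) ≤ g(0⁺) = 0`. If `k(s) ≥ 0`, then `g' ≥ 0` on `[s, ∞)`, so `R' > 0`
there and `R ≥ R(s) > 0` on `[s, ∞)`, contradicting `R → 0`.
-/

open MeasureTheory Filter Set
open scoped Topology

/-- A radial potential shape of class `P_d` (`d ≥ 2`): continuous on `(0, ∞)`,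
non-positive, not identically zero, monotone non-decreasing, no more singular than
`r^{-(d-2)}` at the origin (i.e. `r^{d-2} f(r) → A` with `-∞ < A ≤ 0`), and vanishing
at infinity. -/
structure IsClassPd (d : ℕ) (f : ℝ → ℝ) : Prop where
  cont : ContinuousOn f (Ioi 0)
  nonpos : ∀ r > (0:ℝ), f r ≤ 0
  ne_zero : ∃ r > (0:ℝ), f r ≠ 0
  mono : MonotoneOn f (Ioi 0)
  singularity : ∃ A ≤ (0:ℝ),
    Tendsto (fun r : ℝ => r ^ (d - 2) * f r) (𝓝[>] 0) (𝓝 A)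
  lim_top : Tendsto f atTop (𝓝 0)

theorem hasDerivAt_pow_mul_of_add_div_mul_eq {n : ℕ} {u : ℝ → ℝ} {r w : ℝ} (hr : 0 < r)
    (hu : DifferentiableAt ℝ u r) (h : deriv u r + (n / r) * u r = w) :
    HasDerivAt (fun x => x ^ n * u x) (r ^ n * w) r := by
  refine ((hasDerivAt_pow n r).mul hu.hasDerivAt).congr_deriv ?_
  rw [← h]
  rcases n with _ | n
  · simp
  · rw [Nat.add_sub_cancel]
    field_simp
    ring

theorem le_of_tendsto_nhdsGT_of_antitoneOn {g : ℝ → ℝ} {a s l : ℝ} (hs : a < s)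
    (hg : AntitoneOn g (Ioc a s)) (hl : Tendsto g (𝓝[>] a) (𝓝 l)) : g s ≤ l := by
  refine ge_of_tendsto hl ?_
  filter_upwards [Ioo_mem_nhdsGT hs] with t ht
  exact hg ⟨ht.1, ht.2.le⟩ ⟨hs, le_rfl⟩ ht.2.le

theorem le_of_tendsto_atTop_of_monotoneOn {g : ℝ → ℝ} {s l : ℝ} (hg : MonotoneOn g (Ici s))
    (hl : Tendsto g atTop (𝓝 l)) : g s ≤ l := by
  refine ge_of_tendsto hl ?_
  filter_upwards [eventually_ge_atTop s] with t ht
  exact hg self_mem_Ici ht ht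

theorem monotoneOn_sub_sq_sub_mul {f : ℝ → ℝ} {S : Set ℝ} {c E v : ℝ} (hf : MonotoneOn f S)
    (hv : 0 ≤ v) (hfE : ∀ r ∈ S, v * f r ≤ E) :
    MonotoneOn (fun r => c - (E - v * f r) ^ 2) S := by
  intro a ha b hb hab
  have hvf : v * f a ≤ v * f b := mul_le_mul_of_nonneg_left (hf ha hb hab) hv
  have hsq : (E - v * f b) ^ 2 ≤ (E - v * f a) ^ 2 :=
    pow_le_pow_left₀ (sub_nonneg.mpr (hfE b hb)) (by linarith) 2
  dsimp only
  linarith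

section RadialEquation

variable {n : ℕ} {q R : ℝ → ℝ}

theorem hasDerivAt_pow_mul_deriv_of_radial (hR2 : ∀ r > (0:ℝ), DifferentiableAt ℝ (deriv R) r)
    (heqn : ∀ r > (0:ℝ), deriv (deriv R) r + (n / r) * deriv R r = q r * R r) :
    ∀ r > (0:ℝ), HasDerivAt (fun x => x ^ n * deriv R x) (r ^ n * (q r * R r)) r :=
  fun r hr => hasDerivAt_pow_mul_of_add_div_mul_eq hr (hR2 r hr) (heqn r hr)

theorem deriv_nonpos_of_radial_of_coeff_neg (hq : MonotoneOn q (Ioi 0))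
    (hR2 : ∀ r > (0:ℝ), DifferentiableAt ℝ (deriv R) r) (hRpos : ∀ r > (0:ℝ), 0 < R r)
    (heqn : ∀ r > (0:ℝ), deriv (deriv R) r + (n / r) * deriv R r = q r * R r)
    (h0 : Tendsto (fun r => r ^ n * deriv R r) (𝓝[>] 0) (𝓝 0))
    {s : ℝ} (hs : 0 < s) (hqs : q s < 0) : deriv R s ≤ 0 := by
  have hflux := hasDerivAt_pow_mul_deriv_of_radial hR2 heqn
  have hanti : AntitoneOn (fun x => x ^ n * deriv R x) (Ioc 0 s) := by
    refine antitoneOn_of_hasDerivWithinAt_nonpos (convex_Ioc 0 s)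
      (fun x hx => (hflux x hx.1).continuousAt.continuousWithinAt)
      (fun x hx => (hflux x (interior_subset hx).1).hasDerivWithinAt) ?_
    intro x hx
    rw [interior_Ioc] at hx
    have hqx : q x < 0 := (hq hx.1 hs hx.2.le).trans_lt hqs
    exact mul_nonpos_of_nonneg_of_nonpos (pow_pos hx.1 n).le
      (mul_neg_of_neg_of_pos hqx (hRpos x hx.1)).le
  have hfluxs : s ^ n * deriv R s ≤ 0 :=
    le_of_tendsto_nhdsGT_of_antitoneOn (g := fun x => x ^ n * deriv R x) hs hanti h0
  exact nonpos_of_mul_nonpos_right hfluxs (pow_pos hs n)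

theorem deriv_nonpos_of_radial_of_coeff_nonneg (hq : MonotoneOn q (Ioi 0))
    (hR1 : ∀ r > (0:ℝ), DifferentiableAt ℝ R r)
    (hR2 : ∀ r > (0:ℝ), DifferentiableAt ℝ (deriv R) r) (hRpos : ∀ r > (0:ℝ), 0 < R r)
    (heqn : ∀ r > (0:ℝ), deriv (deriv R) r + (n / r) * deriv R r = q r * R r)
    (hInf : Tendsto R atTop (𝓝 0)) {s : ℝ} (hs : 0 < s) (hqs : 0 ≤ q s) : deriv R s ≤ 0 := by
  by_contra! hpos
  have hflux := hasDerivAt_pow_mul_deriv_of_radial hR2 heqn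
  have hmono : MonotoneOn (fun x => x ^ n * deriv R x) (Ici s) := by
    refine monotoneOn_of_hasDerivWithinAt_nonneg (convex_Ici s)
      (fun x hx => (hflux x (hs.trans_le hx)).continuousAt.continuousWithinAt)
      (fun x hx => (hflux x (hs.trans_le (interior_subset hx))).hasDerivWithinAt) ?_
    intro x hx
    rw [interior_Ici] at hx
    have hx0 : 0 < x := hs.trans hx
    have hqx : 0 ≤ q x := hqs.trans (hq hs hx0 hx.le)
    have := hRpos x hx0
    positivity
  have hderiv_pos : ∀ x ∈ Ici s, 0 < deriv R x := by
    intro x hx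
    have hx0 : 0 < x := hs.trans_le hx
    have hflux_pos : 0 < x ^ n * deriv R x :=
      (mul_pos (pow_pos hs n) hpos).trans_le (hmono self_mem_Ici hx hx)
    exact pos_of_mul_pos_right hflux_pos (pow_pos hx0 n).le
  have hRmono : MonotoneOn R (Ici s) :=
    monotoneOn_of_deriv_nonneg (convex_Ici s)
      (fun x hx => (hR1 x (hs.trans_le hx)).continuousAt.continuousWithinAt)
      (fun x hx => (hR1 x (hs.trans_le (interior_subset hx))).differentiableWithinAt)
      (fun x hx => (hderiv_pos x (interior_subset hx)).le)
  have := le_of_tendsto_atTop_of_monotoneOn hRmono hInf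
  linarith [hRpos s hs]

theorem deriv_nonpos_of_radial (hq : MonotoneOn q (Ioi 0))
    (hR1 : ∀ r > (0:ℝ), DifferentiableAt ℝ R r)
    (hR2 : ∀ r > (0:ℝ), DifferentiableAt ℝ (deriv R) r) (hRpos : ∀ r > (0:ℝ), 0 < R r)
    (heqn : ∀ r > (0:ℝ), deriv (deriv R) r + (n / r) * deriv R r = q r * R r)
    (h0 : Tendsto (fun r => r ^ n * deriv R r) (𝓝[>] 0) (𝓝 0))
    (hInf : Tendsto R atTop (𝓝 0)) : ∀ s > (0:ℝ), deriv R s ≤ 0 := by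
  intro s hs
  rcases lt_or_ge (q s) 0 with hqs | hqs
  · exact deriv_nonpos_of_radial_of_coeff_neg hq hR2 hRpos heqn h0 hs hqs
  · exact deriv_nonpos_of_radial_of_coeff_nonneg hq hR1 hR2 hRpos heqn hInf hs hqs

end RadialEquation

theorem kleinGordon_radial_groundState_monotone_general
    (d : ℕ) (hd : 2 ≤ d) (m E v : ℝ) (hv : 0 < v)
    (f : ℝ → ℝ) (hf : IsClassPd d f)
    (R : ℝ → ℝ)
    (hR1 : ∀ r > (0:ℝ), DifferentiableAt ℝ R r)
    (hR2 : ∀ r > (0:ℝ), DifferentiableAt ℝ (deriv R) r)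
    (hRpos : ∀ r > (0:ℝ), 0 < R r)
    (heqn : ∀ r > (0:ℝ), deriv (deriv R) r + (((d:ℝ) - 1) / r) * deriv R r
        = (m ^ 2 - (E - v * f r) ^ 2) * R r)
    (hbc0 : Tendsto (fun r : ℝ => r ^ (d - 1) * deriv R r) (𝓝[>] 0) (𝓝 0))
    (hbcInf : Tendsto R atTop (𝓝 0))
    (hfE : ∀ r > (0:ℝ), v * f r ≤ E) :
    ∀ r > (0:ℝ), deriv R r ≤ 0 := by
  obtain ⟨n, rfl⟩ : ∃ n, d = n + 1 := ⟨d - 1, by omega⟩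
  have hcoeff : MonotoneOn (fun r => m ^ 2 - (E - v * f r) ^ 2) (Ioi 0) :=
    monotoneOn_sub_sq_sub_mul hf.mono hv.le hfE
  refine deriv_nonpos_of_radial hcoeff hR1 hR2 hRpos (fun r hr => ?_) hbc0 hbcInf
  simpa using heqn r hr

/-- the strictly positive radial ground state (`l = 0`) of the
`d`-dimensional Klein--Gordon equation
`R'' + ((d−1)/r) R' = (m² − (E − v f)²) R` is non-increasing on `(0, ∞)`. -/
theorem kleinGordon_radial_groundState_monotone
    (d : ℕ) (hd : 2 ≤ d) (m E v : ℝ) (hm : 0 < m) (hE : |E| < m) (hv : 0 < v)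
    (f : ℝ → ℝ) (hf : IsClassPd d f)
    (R : ℝ → ℝ)
    (hR1 : ∀ r > (0:ℝ), DifferentiableAt ℝ R r)
    (hR2 : ∀ r > (0:ℝ), DifferentiableAt ℝ (deriv R) r)
    (hR2c : ContinuousOn (deriv (deriv R)) (Ioi 0))
    (hRpos : ∀ r > (0:ℝ), 0 < R r)
    (heqn : ∀ r > (0:ℝ), deriv (deriv R) r + (((d:ℝ) - 1) / r) * deriv R r
        = (m ^ 2 - (E - v * f r) ^ 2) * R r)
    (hbc0 : Tendsto (fun r : ℝ => r ^ (d - 1) * deriv R r) (𝓝[>] 0) (𝓝 0))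
    (hbcInf : Tendsto R atTop (𝓝 0))
    (hfE : ∀ r > (0:ℝ), v * f r ≤ E) :
    ∀ r > (0:ℝ), deriv R r ≤ 0 :=
  kleinGordon_radial_groundState_monotone_general d hd m E v hv f hf R hR1 hR2 hRpos heqn hbc0
    hbcInf hfE
end

section
/- Let d ≥ 3 be an integer, m > 0, and E ∈ (−m, m). Let w : (0,∞) → ℝ be continuous, non-increasing, with 0 < w(0⁺) ≤ 1 (i.e., w(r) ≤ 1 for all r > 0 and w not identically zero) and w(r) → 0 as r → ∞, and set f(r) = −w(r)/r. Let 0 < v < (d−2)/2, and let R : (0,∞) → ℝ be a twice continuously differentiable, strictly positive radial ground state of R''(r) + ((d−1)/r) R'(r) = [m² − (E − v f(r))²] R(r), normalized by ∫₀^∞ R(r)² r^{d−1} dr = 1, with r^{d−1} R(r) R'(r) → 0 as r → 0⁺ and as r → ∞, and such that ∫₀^∞ R'(r)² r^{d−1} dr, ∫₀^∞ R(r)² r^{d−3} dr, ∫₀^∞ f(r) R(r)² r^{d−1} dr, and ∫₀^∞ f(r)² R(r)² r^{d−1} dr are all finite. Then E > 0. -/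
/-!
Multiplying the radial equation by `r^(d-1) R` and integrating by parts (the boundary terms vanish)
gives `⟨-Δ⟩ + m² = E² - 2 E v ⟨f⟩ + v² ⟨f²⟩`, where `⟨g⟩ = ∫ g R² r^(d-1)`. If `E ≤ 0`, then
`f ≤ 0` makes the middle term nonpositive, and `|f| ≤ 1/r` together with `E² < m²` gives
`⟨-Δ⟩ < v² ⟨r⁻²⟩`. This contradicts the Hardy inequality `⟨-Δ⟩ ≥ ((d-2)/2)² ⟨r⁻²⟩`, since
`v < (d-2)/2`. The Hardy inequality follows by expanding `∫ (r R' + c R)² r^(d-3) ≥ 0` with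
`c = (d-2)/2`, once one knows `∫ (R² r^(d-2))' ≤ 0`: the nonnegative function `R² r^(d-2)` has a
limit at infinity, which must be `0` because `R² r^(d-3)` is integrable.
-/

open MeasureTheory Filter Set
open scoped Topology

section ImproperFTC

variable {f f' : ℝ → ℝ} {a : ℝ}

theorem exists_tendsto_nhdsGT_of_hasDerivAt_of_integrableOn_Ioi
    (hderiv : ∀ x ∈ Ioi a, HasDerivAt f (f' x) x) (f'int : IntegrableOn f' (Ioi a)) :
    ∃ l, Tendsto f (𝓝[>] a) (𝓝 l) := by
  have hab : a < a + 1 := lt_add_one a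
  have hint : IntegrableOn f' (uIcc a (a + 1)) := by
    rw [uIcc_of_le hab.le, integrableOn_Icc_iff_integrableOn_Ioc]
    exact f'int.mono_set Ioc_subset_Ioi_self
  have hprim : Tendsto (fun x => ∫ t in x..a + 1, f' t) (𝓝[>] a)
      (𝓝 (∫ t in a..a + 1, f' t)) := by
    refine (intervalIntegral.continuousOn_primitive_interval_left hint a left_mem_uIcc).mono_left
      (nhdsWithin_le_of_mem ?_)
    rw [uIcc_of_le hab.le]
    exact Icc_mem_nhdsGT hab
  refine ⟨f (a + 1) - ∫ t in a..a + 1, f' t, (tendsto_const_nhds.sub hprim).congr' ?_⟩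
  filter_upwards [Ioc_mem_nhdsGT hab] with x hx
  rw [intervalIntegral.integral_eq_sub_of_hasDerivAt, sub_sub_cancel]
  · intro y hy
    rw [uIcc_of_le hx.2] at hy
    exact hderiv y (hx.1.trans_le hy.1)
  · rw [intervalIntegrable_iff_integrableOn_Ioc_of_le hx.2]
    exact f'int.mono_set (Ioc_subset_Ioi_self.trans (Ioi_subset_Ioi hx.1.le))

theorem integral_Ioi_of_hasDerivAt_of_tendsto_nhdsGT {l m : ℝ}
    (hderiv : ∀ x ∈ Ioi a, HasDerivAt f (f' x) x) (f'int : IntegrableOn f' (Ioi a))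
    (ha : Tendsto f (𝓝[>] a) (𝓝 l)) (htop : Tendsto f atTop (𝓝 m)) :
    ∫ x in Ioi a, f' x = m - l := by
  classical
  have hupd : ∀ x ∈ Ioi a, Function.update f a l =ᶠ[𝓝 x] f := fun x hx =>
    (eventually_ne_nhds (ne_of_gt hx)).mono fun y hy => Function.update_of_ne hy _ _
  have := integral_Ioi_of_hasDerivAt_of_tendsto (f := Function.update f a l)
    (continuousWithinAt_update_same.2 (by rwa [Ici_sdiff_left]))
    (fun x hx => (hderiv x hx).congr_of_eventuallyEq (hupd x hx)) f'int
    (htop.congr' ((eventually_ne_atTop a).mono fun y hy => (Function.update_of_ne hy _ _).symm))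
  simpa using this

theorem integral_Ioi_deriv_nonpos_of_nonneg (hderiv : ∀ x ∈ Ioi a, HasDerivAt f (f' x) x)
    (f'int : IntegrableOn f' (Ioi a)) (hf : ∀ x ∈ Ioi a, 0 ≤ f x)
    (htop : Tendsto f atTop (𝓝 0)) : ∫ x in Ioi a, f' x ≤ 0 := by
  obtain ⟨l, hl⟩ := exists_tendsto_nhdsGT_of_hasDerivAt_of_integrableOn_Ioi hderiv f'int
  have hl_nonneg : 0 ≤ l := ge_of_tendsto hl (eventually_nhdsWithin_of_forall hf)
  rw [integral_Ioi_of_hasDerivAt_of_tendsto_nhdsGT hderiv f'int hl htop]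
  linarith

end ImproperFTC

theorem eq_zero_of_tendsto_atTop_of_integrableOn_div {f : ℝ → ℝ} {a l : ℝ}
    (hf : Tendsto f atTop (𝓝 l)) (hint : IntegrableOn (fun x => f x / x) (Ioi a)) : l = 0 := by
  by_contra hl
  have hl' : 0 < |l| := abs_pos.2 hl
  obtain ⟨B, hB⟩ := eventually_atTop.1
    ((hf.abs.eventually (eventually_ge_nhds (half_lt_self hl'))).and (eventually_gt_atTop (max a 0)))
  refine not_integrableOn_Ioi_inv (a := B) ?_
  refine Integrable.mono' ((hint.mono_set ?_).norm.const_mul (2 / |l|))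
    measurable_inv.aestronglyMeasurable ?_
  · exact fun x hx => max_lt_iff.1 (hB x (le_of_lt hx)).2 |>.1
  · refine (ae_restrict_iff' measurableSet_Ioi).2 (Eventually.of_forall fun x hx => ?_)
    obtain ⟨hfx, hxa⟩ := hB x (le_of_lt hx)
    have hx0 : 0 < x := (le_max_right a 0).trans_lt hxa
    simp only [norm_div, norm_inv, Real.norm_eq_abs, abs_of_pos hx0]
    calc x⁻¹ = 2 / |l| * (|l| / 2 / x) := by field_simp
      _ ≤ 2 / |l| * (|f x| / x) := by gcongr

theorem hasDerivAt_pow_mul_mul_deriv {R : ℝ → ℝ} {n : ℕ} {r : ℝ} (hr : 0 < r)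
    (hR : DifferentiableAt ℝ R r) (hR' : DifferentiableAt ℝ (deriv R) r) :
    HasDerivAt (fun x => x ^ n * R x * deriv R x)
      (deriv R r ^ 2 * r ^ n + r ^ n * R r * (deriv (deriv R) r + n / r * deriv R r)) r := by
  refine (((hasDerivAt_pow n r).mul hR.hasDerivAt).mul hR'.hasDerivAt).congr_deriv ?_
  rcases n with _ | n
  · simp [sq]
  · simp only [Nat.cast_add_one, add_tsub_cancel_right, Pi.mul_apply, pow_succ]
    field_simp
    ring

theorem integral_deriv_sq_mul_pow_add_integral_eq_zero {R Q : ℝ → ℝ} {n : ℕ}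
    (hR : ∀ r > 0, DifferentiableAt ℝ R r) (hR' : ∀ r > 0, DifferentiableAt ℝ (deriv R) r)
    (heqn : ∀ r > 0, deriv (deriv R) r + n / r * deriv R r = Q r * R r)
    (h0 : Tendsto (fun r => r ^ n * R r * deriv R r) (𝓝[>] 0) (𝓝 0))
    (htop : Tendsto (fun r => r ^ n * R r * deriv R r) atTop (𝓝 0))
    (hT : IntegrableOn (fun r => deriv R r ^ 2 * r ^ n) (Ioi 0))
    (hQ : IntegrableOn (fun r => Q r * (R r ^ 2 * r ^ n)) (Ioi 0)) :
    (∫ r in Ioi 0, deriv R r ^ 2 * r ^ n) + ∫ r in Ioi 0, Q r * (R r ^ 2 * r ^ n) = 0 := by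
  have hderiv : ∀ r ∈ Ioi (0 : ℝ), HasDerivAt (fun x => x ^ n * R x * deriv R x)
      (deriv R r ^ 2 * r ^ n + Q r * (R r ^ 2 * r ^ n)) r := by
    intro r hr
    convert hasDerivAt_pow_mul_mul_deriv (n := n) hr (hR r hr) (hR' r hr) using 1
    rw [heqn r hr]
    ring
  rw [← integral_add hT hQ, integral_Ioi_of_hasDerivAt_of_tendsto_nhdsGT hderiv (hT.add hQ) h0 htop,
    sub_zero]

section Hardy

variable {R : ℝ → ℝ} {k : ℕ}

theorem integrableOn_mul_deriv_mul_pow (hR : ∀ r > 0, DifferentiableAt ℝ R r)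
    (hT : IntegrableOn (fun r => deriv R r ^ 2 * r ^ (k + 2)) (Ioi 0))
    (hJ : IntegrableOn (fun r => R r ^ 2 * r ^ k) (Ioi 0)) :
    IntegrableOn (fun r => R r * deriv R r * r ^ (k + 1)) (Ioi 0) := by
  have hRcont : ContinuousOn R (Ioi 0) := fun r hr => (hR r hr).continuousAt.continuousWithinAt
  refine Integrable.mono' (hJ.add hT) (((hRcont.aestronglyMeasurable measurableSet_Ioi).mul
    (measurable_deriv R).aestronglyMeasurable).mul (continuous_pow _).aestronglyMeasurable)
    ((ae_restrict_iff' measurableSet_Ioi).2 (Eventually.of_forall fun r (hr : 0 < r) => ?_))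
  have hrk := pow_nonneg hr.le k
  have hplus : 0 ≤ R r ^ 2 * r ^ k + 2 * (R r * deriv R r * r ^ (k + 1))
      + deriv R r ^ 2 * r ^ (k + 2) :=
    (mul_nonneg (sq_nonneg (R r + deriv R r * r)) hrk).trans_eq (by ring)
  have hminus : 0 ≤ R r ^ 2 * r ^ k - 2 * (R r * deriv R r * r ^ (k + 1))
      + deriv R r ^ 2 * r ^ (k + 2) :=
    (mul_nonneg (sq_nonneg (R r - deriv R r * r)) hrk).trans_eq (by ring)
  have hJr : 0 ≤ R r ^ 2 * r ^ k := by positivity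
  have hTr : 0 ≤ deriv R r ^ 2 * r ^ (k + 2) := by positivity
  rw [Real.norm_eq_abs, Pi.add_apply, abs_le]
  constructor <;> linarith

theorem radial_hardy_inequality (hR : ∀ r > 0, DifferentiableAt ℝ R r)
    (hT : IntegrableOn (fun r => deriv R r ^ 2 * r ^ (k + 2)) (Ioi 0))
    (hJ : IntegrableOn (fun r => R r ^ 2 * r ^ k) (Ioi 0)) :
    ((k + 1) / 2 : ℝ) ^ 2 * ∫ r in Ioi 0, R r ^ 2 * r ^ k
      ≤ ∫ r in Ioi 0, deriv R r ^ 2 * r ^ (k + 2) := by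
  have hK := integrableOn_mul_deriv_mul_pow hR hT hJ
  have hderiv : ∀ r ∈ Ioi (0 : ℝ), HasDerivAt (fun x => R x ^ 2 * x ^ (k + 1))
      (2 * (R r * deriv R r * r ^ (k + 1)) + (k + 1) * (R r ^ 2 * r ^ k)) r := by
    intro r hr
    refine (((hR r hr).hasDerivAt.pow 2).mul (hasDerivAt_pow (k + 1) r)).congr_deriv ?_
    simp only [Pi.pow_apply]
    push_cast
    ring
  have hderiv_int := (hK.const_mul 2).add (hJ.const_mul ((k : ℝ) + 1))
  have htop : Tendsto (fun x => R x ^ 2 * x ^ (k + 1)) atTop (𝓝 0) := by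
    have hlim := tendsto_limUnder_of_hasDerivAt_of_integrableOn_Ioi hderiv hderiv_int
    rwa [eq_zero_of_tendsto_atTop_of_integrableOn_div (a := 0) hlim ?_] at hlim
    refine hJ.congr_fun (fun r (hr : 0 < r) => ?_) measurableSet_Ioi
    field_simp
    ring
  have hboundary := integral_Ioi_deriv_nonpos_of_nonneg hderiv hderiv_int
    (fun r (hr : 0 < r) => by positivity) htop
  rw [integral_add (hK.const_mul 2) (hJ.const_mul _), integral_const_mul,
    integral_const_mul] at hboundary
  have hsq : 0 ≤ ∫ r in Ioi 0, (deriv R r * r + (k + 1) / 2 * R r) ^ 2 * r ^ k :=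
    setIntegral_nonneg measurableSet_Ioi fun r (hr : 0 < r) => by positivity
  have hexpand : ∫ r in Ioi 0, (deriv R r * r + (k + 1) / 2 * R r) ^ 2 * r ^ k
      = (∫ r in Ioi 0, deriv R r ^ 2 * r ^ (k + 2))
        + (k + 1) * (∫ r in Ioi 0, R r * deriv R r * r ^ (k + 1))
        + ((k + 1) / 2) ^ 2 * ∫ r in Ioi 0, R r ^ 2 * r ^ k := by
    have hfun : (fun r => (deriv R r * r + (k + 1) / 2 * R r) ^ 2 * r ^ k)
        = fun r => deriv R r ^ 2 * r ^ (k + 2) + (k + 1) * (R r * deriv R r * r ^ (k + 1))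
          + ((k + 1) / 2) ^ 2 * (R r ^ 2 * r ^ k) := by
      funext r
      ring
    rw [hfun, integral_add ?_ (hJ.const_mul _), integral_add hT (hK.const_mul _),
      integral_const_mul, integral_const_mul]
    exact hT.add (hK.const_mul _)
  linarith [mul_le_mul_of_nonneg_left hboundary (by positivity : (0 : ℝ) ≤ (k + 1) / 2)]

end Hardy

theorem setIntegral_Ioi_pos {g : ℝ → ℝ} {a : ℝ} (hg : ∀ r > a, 0 < g r)
    (hint : IntegrableOn g (Ioi a)) : 0 < ∫ r in Ioi a, g r := by
  rw [setIntegral_pos_iff_support_of_nonneg_ae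
    ((ae_restrict_iff' measurableSet_Ioi).2 (.of_forall fun r hr => (hg r hr).le)) hint,
    show Function.support g ∩ Ioi a = Ioi a from inter_eq_right.2 fun r hr => (hg r hr).ne',
    Real.volume_Ioi]
  exact ENNReal.zero_lt_top

section KleinGordonPotential

variable {g A : ℝ → ℝ} {s : Set ℝ} (m E v : ℝ)

theorem kleinGordon_potential_eq (r : ℝ) :
    (m ^ 2 - (E - v * g r) ^ 2) * A r
      = (m ^ 2 - E ^ 2) * A r + 2 * E * v * (g r * A r) - v ^ 2 * (g r ^ 2 * A r) := by
  ring

theorem integrableOn_kleinGordon_potential (hA : IntegrableOn A s)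
    (hgA : IntegrableOn (fun r => g r * A r) s) (hg2A : IntegrableOn (fun r => g r ^ 2 * A r) s) :
    IntegrableOn (fun r => (m ^ 2 - (E - v * g r) ^ 2) * A r) s := by
  simp only [kleinGordon_potential_eq]
  exact ((hA.const_mul _).add (hgA.const_mul _)).sub (hg2A.const_mul _)

theorem integral_kleinGordon_potential (hA : IntegrableOn A s)
    (hgA : IntegrableOn (fun r => g r * A r) s) (hg2A : IntegrableOn (fun r => g r ^ 2 * A r) s) :
    ∫ r in s, (m ^ 2 - (E - v * g r) ^ 2) * A r
      = (m ^ 2 - E ^ 2) * (∫ r in s, A r) + 2 * E * v * (∫ r in s, g r * A r)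
        - v ^ 2 * ∫ r in s, g r ^ 2 * A r := by
  simp only [kleinGordon_potential_eq]
  rw [integral_sub ?_ (hg2A.const_mul _), integral_add (hA.const_mul _) (hgA.const_mul _),
    integral_const_mul, integral_const_mul, integral_const_mul]
  exact (hA.const_mul _).add (hgA.const_mul _)

end KleinGordonPotential

theorem neg_div_nonpos_and_sq_mul_sq_le_one {w r : ℝ} (hr : 0 < r) (hw0 : 0 ≤ w) (hw1 : w ≤ 1) :
    -w / r ≤ 0 ∧ (-w / r) ^ 2 * r ^ 2 ≤ 1 := by
  refine ⟨div_nonpos_of_nonpos_of_nonneg (neg_nonpos.2 hw0) hr.le, ?_⟩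
  rw [div_pow, neg_sq, div_mul_cancel₀ _ (by positivity)]
  exact pow_le_one₀ hw0 hw1

theorem kleinGordon_coulombLike_energy_pos_general
    (d : ℕ) (hd : 3 ≤ d) (m E : ℝ) (hE : E ∈ Ioo (-m) m)
    (w : ℝ → ℝ)
    (hw_anti : AntitoneOn w (Ioi 0))
    (hw_le : ∀ r > (0:ℝ), w r ≤ 1)
    (hw_lim : Tendsto w atTop (𝓝 0))
    (f : ℝ → ℝ) (hf : ∀ r, f r = -(w r) / r)
    (v : ℝ) (hv : 0 < v) (hv' : v < ((d:ℝ) - 2) / 2)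
    (R : ℝ → ℝ)
    (hR1 : ∀ r > (0:ℝ), DifferentiableAt ℝ R r)
    (hR2 : ∀ r > (0:ℝ), DifferentiableAt ℝ (deriv R) r)
    (hRpos : ∀ r > (0:ℝ), 0 < R r)
    (heqn : ∀ r > (0:ℝ), deriv (deriv R) r + (((d:ℝ) - 1) / r) * deriv R r
        = (m ^ 2 - (E - v * f r) ^ 2) * R r)
    (hnorm : ∫ r in Ioi (0:ℝ), R r ^ 2 * r ^ (d - 1) = 1)
    (hbc0 : Tendsto (fun r : ℝ => r ^ (d - 1) * R r * deriv R r) (𝓝[>] 0) (𝓝 0))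
    (hbcInf : Tendsto (fun r : ℝ => r ^ (d - 1) * R r * deriv R r) atTop (𝓝 0))
    (hint1 : IntegrableOn (fun r => (deriv R r) ^ 2 * r ^ (d - 1)) (Ioi 0))
    (hint2 : IntegrableOn (fun r => R r ^ 2 * r ^ (d - 3)) (Ioi 0))
    (hint3 : IntegrableOn (fun r => f r * R r ^ 2 * r ^ (d - 1)) (Ioi 0))
    (hint4 : IntegrableOn (fun r => f r ^ 2 * R r ^ 2 * r ^ (d - 1)) (Ioi 0)) :
    0 < E := by
  obtain ⟨k, rfl⟩ := Nat.exists_eq_add_of_le' hd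
  rw [show k + 3 - 1 = k + 2 from rfl] at hnorm hbc0 hbcInf hint1 hint3 hint4
  rw [show k + 3 - 3 = k from rfl] at hint2
  simp only [mul_assoc] at hint3 hint4
  have hN := Integrable.of_integral_ne_zero (hnorm ▸ one_ne_zero)
  have henergy := integral_deriv_sq_mul_pow_add_integral_eq_zero hR1 hR2
    (fun r hr => by rw [← heqn r hr]; push_cast; ring) hbc0 hbcInf hint1
    (integrableOn_kleinGordon_potential m E v hN hint3 hint4)
  rw [integral_kleinGordon_potential m E v hN hint3 hint4, hnorm] at henergy
  have hhardy := radial_hardy_inequality hR1 hint1 hint2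
  have hf_bounds : ∀ r > 0, f r ≤ 0 ∧ f r ^ 2 * r ^ 2 ≤ 1 := fun r hr => hf r ▸
    neg_div_nonpos_and_sq_mul_sq_le_one hr (le_of_tendsto hw_lim ((eventually_ge_atTop r).mono
      fun s hs => hw_anti hr (hr.trans_le hs) hs)) (hw_le r hr)
  have hIf : ∫ r in Ioi 0, f r * (R r ^ 2 * r ^ (k + 2)) ≤ 0 :=
    setIntegral_nonpos measurableSet_Ioi fun r (hr : 0 < r) =>
      mul_nonpos_of_nonpos_of_nonneg (hf_bounds r hr).1 (by positivity)
  have hIf2 : ∫ r in Ioi 0, f r ^ 2 * (R r ^ 2 * r ^ (k + 2)) ≤ ∫ r in Ioi 0, R r ^ 2 * r ^ k :=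
    setIntegral_mono_on hint4 hint2 measurableSet_Ioi fun r (hr : 0 < r) => by
      rw [show f r ^ 2 * (R r ^ 2 * r ^ (k + 2)) = f r ^ 2 * r ^ 2 * (R r ^ 2 * r ^ k) by ring]
      exact mul_le_of_le_one_left (by positivity) (hf_bounds r hr).2
  have hJ := setIntegral_Ioi_pos (fun r (hr : 0 < r) => by have := hRpos r hr; positivity) hint2
  have hvc : v ^ 2 < ((k + 1) / 2 : ℝ) ^ 2 :=
    pow_lt_pow_left₀ (by push_cast at hv'; linarith) hv.le two_ne_zero
  by_contra! hE0
  linarith [mul_nonneg (mul_nonneg_of_nonpos_of_nonpos hE0 hIf) hv.le,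
    mul_pos (sub_pos.2 hE.2) (neg_lt_iff_pos_add.1 hE.1),
    mul_le_mul_of_nonneg_left hIf2 (sq_nonneg v), mul_lt_mul_of_pos_right hvc hJ]

/-- for a Coulomb-like potential `f(r) = −w(r)/r` in dimension `d ≥ 3`,
with `w` continuous, non-increasing, `w ≤ 1`, not identically zero, vanishing at
infinity, and coupling `0 < v < (d−2)/2`, the ground-state energy `E ∈ (−m, m)` of the
radial Klein--Gordon equation is positive. -/
theorem kleinGordon_coulombLike_energy_pos
    (d : ℕ) (hd : 3 ≤ d) (m E : ℝ) (hm : 0 < m) (hE : E ∈ Ioo (-m) m)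
    (w : ℝ → ℝ) (hw_cont : ContinuousOn w (Ioi 0))
    (hw_anti : AntitoneOn w (Ioi 0))
    (hw_le : ∀ r > (0:ℝ), w r ≤ 1)
    (hw_ne : ∃ r > (0:ℝ), w r ≠ 0)
    (hw_lim : Tendsto w atTop (𝓝 0))
    (f : ℝ → ℝ) (hf : ∀ r, f r = -(w r) / r)
    (v : ℝ) (hv : 0 < v) (hv' : v < ((d:ℝ) - 2) / 2)
    (R : ℝ → ℝ)
    (hR1 : ∀ r > (0:ℝ), DifferentiableAt ℝ R r)
    (hR2 : ∀ r > (0:ℝ), DifferentiableAt ℝ (deriv R) r)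
    (hR2c : ContinuousOn (deriv (deriv R)) (Ioi 0))
    (hRpos : ∀ r > (0:ℝ), 0 < R r)
    (heqn : ∀ r > (0:ℝ), deriv (deriv R) r + (((d:ℝ) - 1) / r) * deriv R r
        = (m ^ 2 - (E - v * f r) ^ 2) * R r)
    (hnorm : ∫ r in Ioi (0:ℝ), R r ^ 2 * r ^ (d - 1) = 1)
    (hbc0 : Tendsto (fun r : ℝ => r ^ (d - 1) * R r * deriv R r) (𝓝[>] 0) (𝓝 0))
    (hbcInf : Tendsto (fun r : ℝ => r ^ (d - 1) * R r * deriv R r) atTop (𝓝 0))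
    (hint1 : IntegrableOn (fun r => (deriv R r) ^ 2 * r ^ (d - 1)) (Ioi 0))
    (hint2 : IntegrableOn (fun r => R r ^ 2 * r ^ (d - 3)) (Ioi 0))
    (hint3 : IntegrableOn (fun r => f r * R r ^ 2 * r ^ (d - 1)) (Ioi 0))
    (hint4 : IntegrableOn (fun r => f r ^ 2 * R r ^ 2 * r ^ (d - 1)) (Ioi 0)) :
    0 < E :=
  kleinGordon_coulombLike_energy_pos_general d hd m E hE w hw_anti hw_le hw_lim f hf v hv hv' R hR1
    hR2 hRpos heqn hnorm hbc0 hbcInf hint1 hint2 hint3 hint4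
end

section
/- Let v > 0 and E ∈ ℝ. Let f, f₁, f₂ : [0,∞) → ℝ be continuous, with f continuously differentiable and monotone non-decreasing, and v f(x) ≤ E for all x ≥ 0. Let φ : [0,∞) → ℝ be continuously differentiable with φ(x) ≥ 0 and φ'(x) ≤ 0 for all x ≥ 0, and φ(x) → 0 as x → ∞. Set μ(x) = ∫₀^x [f₂(t) − f₁(t)] dt, and assume μ(x) ≥ 0 for all x ≥ 0, that the integrals ∫₀^∞ (f₂ − f₁)(v f − E) φ² dx and ∫₀^∞ [v f'(x) φ(x)² + 2(v f(x) − E) φ(x) φ'(x)] μ(x) dx converge, and that (v f(x) − E) φ(x)² μ(x) → 0 as x → ∞. Then I = ∫₀^∞ [f₂(x) − f₁(x)] [v f(x) − E] φ(x)² dx ≤ 0. -/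
/-!
Since `μ' = f₂ − f₁`, the integrand of `I` is `F' − w μ` for `F = (v f − E) φ² μ` and
`w = ((v f − E) φ²)'`. Integrating over `(0, ∞)`, the boundary terms vanish (`μ 0 = 0` and
`F → 0`), so `I = −∫ w μ`. Finally `w ≥ 0`: `(v f − E) φ²` is the product of the nonpositive
nondecreasing `v f − E` and the nonnegative nonincreasing `φ²`; together with `μ ≥ 0` this
gives `I ≤ 0`.
-/

open MeasureTheory Filter Set
open scoped Topology

lemma MonotoneOn.deriv_nonneg_of_mem_nhds {g : ℝ → ℝ} {s : Set ℝ} {x : ℝ}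
    (hg : MonotoneOn g s) (hs : s ∈ 𝓝 x) : 0 ≤ deriv g x := by
  rw [← derivWithin_of_mem_nhds hs]
  exact hg.derivWithin_nonneg

section Primitive

variable {G : Type*} [NormedAddCommGroup G] [NormedSpace ℝ G] [CompleteSpace G]
  {g : ℝ → G} {a : ℝ}

lemma hasDerivAt_primitive_of_continuousOn_Ici (hg : ContinuousOn g (Ici a)) {x : ℝ}
    (hx : a < x) : HasDerivAt (fun u => ∫ t in a..u, g t) (g x) x :=
  intervalIntegral.integral_hasDerivAt_right
    (hg.mono (uIcc_of_le hx.le ▸ Icc_subset_Ici_self)).intervalIntegrable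
    ((hg.mono Ioi_subset_Ici_self).stronglyMeasurableAtFilter isOpen_Ioi x hx)
    (hg.continuousAt (Ici_mem_nhds hx))

lemma continuousWithinAt_primitive_of_continuousOn_Ici (hg : ContinuousOn g (Ici a)) :
    ContinuousWithinAt (fun u => ∫ t in a..u, g t) (Ici a) a :=
  (intervalIntegral.integral_hasDerivWithinAt_right (s := Ici a) (t := Ioi a)
    IntervalIntegrable.refl
    ((hg.mono Ioi_subset_Ici_self).stronglyMeasurableAtFilter_nhdsWithin measurableSet_Ioi a)
    ((hg a self_mem_Ici).mono Ioi_subset_Ici_self)).continuousWithinAt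

end Primitive

lemma setIntegral_Ioi_nonpos_of_hasDerivAt_add {F p q : ℝ → ℝ} {a : ℝ}
    (hcont : ContinuousWithinAt F (Ici a) a) (hderiv : ∀ x ∈ Ioi a, HasDerivAt F (p x + q x) x)
    (hp : IntegrableOn p (Ioi a)) (hq : IntegrableOn q (Ioi a))
    (hp_nonneg : ∀ x ∈ Ioi a, 0 ≤ p x) (hFa : F a = 0) (hF : Tendsto F atTop (𝓝 0)) :
    ∫ x in Ioi a, q x ≤ 0 := by
  have hFTC : ∫ x in Ioi a, (p x + q x) = 0 := by
    rw [integral_Ioi_of_hasDerivAt_of_tendsto hcont hderiv (hp.add hq) hF, hFa, sub_zero]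
  have hp_int : 0 ≤ ∫ x in Ioi a, p x := setIntegral_nonneg measurableSet_Ioi hp_nonneg
  rw [integral_add hp hq] at hFTC
  linarith

lemma hasDerivAt_potential_mul_sq {v E : ℝ} {f φ : ℝ → ℝ} {x : ℝ}
    (hf : DifferentiableAt ℝ f x) (hφ : DifferentiableAt ℝ φ x) :
    HasDerivAt (fun y => (v * f y - E) * φ y ^ 2)
      (v * deriv f x * φ x ^ 2 + 2 * (v * f x - E) * φ x * deriv φ x) x := by
  refine (((hf.hasDerivAt.const_mul v).sub_const E).fun_mul
    (hφ.hasDerivAt.fun_pow 2)).congr_deriv ?_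
  norm_num
  ring

lemma deriv_potential_mul_sq_nonneg {v E f f' φ φ' : ℝ} (hv : 0 ≤ v) (hf' : 0 ≤ f')
    (hfE : v * f ≤ E) (hφ : 0 ≤ φ) (hφ' : φ' ≤ 0) :
    0 ≤ v * f' * φ ^ 2 + 2 * (v * f - E) * φ * φ' := by
  have hpot : 0 ≤ (E - v * f) * φ * -φ' :=
    mul_nonneg (mul_nonneg (sub_nonneg.2 hfE) hφ) (neg_nonneg.2 hφ')
  have hkin : 0 ≤ v * f' * φ ^ 2 := by positivity
  linarith

theorem kleinGordon_refined_integral_ineq_1d_general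
    (v E : ℝ) (hv : 0 < v)
    (f f₁ f₂ φ : ℝ → ℝ)
    (hf₁_cont : ContinuousOn f₁ (Ici 0))
    (hf₂_cont : ContinuousOn f₂ (Ici 0))
    (hf_diff : ∀ x ≥ (0:ℝ), DifferentiableAt ℝ f x)
    (hf_mono : MonotoneOn f (Ici 0))
    (hfE : ∀ x ≥ (0:ℝ), v * f x ≤ E)
    (hφ_diff : ∀ x ≥ (0:ℝ), DifferentiableAt ℝ φ x)
    (hφ_nonneg : ∀ x ≥ (0:ℝ), 0 ≤ φ x)
    (hφ'_nonpos : ∀ x ≥ (0:ℝ), deriv φ x ≤ 0)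
    (hμ : ∀ x ≥ (0:ℝ), 0 ≤ ∫ t in (0:ℝ)..x, (f₂ t - f₁ t))
    (hint1 : IntegrableOn (fun x => (f₂ x - f₁ x) * (v * f x - E) * φ x ^ 2) (Ioi 0))
    (hint2 : IntegrableOn
      (fun x => (v * deriv f x * φ x ^ 2 + 2 * (v * f x - E) * φ x * deriv φ x)
        * ∫ t in (0:ℝ)..x, (f₂ t - f₁ t)) (Ioi 0))
    (hlim : Tendsto
      (fun x => (v * f x - E) * φ x ^ 2 * ∫ t in (0:ℝ)..x, (f₂ t - f₁ t))
      atTop (𝓝 0)) :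
    (∫ x in Ioi (0:ℝ), (f₂ x - f₁ x) * (v * f x - E) * φ x ^ 2) ≤ 0 := by
  have hsub : ContinuousOn (fun t => f₂ t - f₁ t) (Ici 0) := hf₂_cont.sub hf₁_cont
  have hcont : ContinuousWithinAt
      (fun x => (v * f x - E) * φ x ^ 2 * ∫ t in (0:ℝ)..x, (f₂ t - f₁ t)) (Ici 0) 0 :=
    (hasDerivAt_potential_mul_sq (hf_diff 0 le_rfl) (hφ_diff 0 le_rfl)).continuousAt
      |>.continuousWithinAt.mul (continuousWithinAt_primitive_of_continuousOn_Ici hsub)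
  refine setIntegral_Ioi_nonpos_of_hasDerivAt_add hcont (fun x hx => ?_) hint2 hint1
    (fun x hx => ?_) (by simp) hlim
  · exact (hasDerivAt_potential_mul_sq (hf_diff x hx.le) (hφ_diff x hx.le)).fun_mul
      (hasDerivAt_primitive_of_continuousOn_Ici hsub hx) |>.congr_deriv (by ring)
  · exact mul_nonneg (deriv_potential_mul_sq_nonneg hv.le
      (hf_mono.deriv_nonneg_of_mem_nhds (Ici_mem_nhds hx)) (hfE x hx.le)
      (hφ_nonneg x hx.le) (hφ'_nonpos x hx.le)) (hμ x hx.le)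

/-- key integral inequality of the one-dimensional refined comparison
theorem: if `μ(x) = ∫₀^x (f₂ − f₁) ≥ 0` for all `x ≥ 0`, then
`I = ∫₀^∞ (f₂ − f₁)(v f − E) φ² dx ≤ 0`. -/
theorem kleinGordon_refined_integral_ineq_1d
    (v E : ℝ) (hv : 0 < v)
    (f f₁ f₂ φ : ℝ → ℝ)
    (hf_cont : ContinuousOn f (Ici 0))
    (hf₁_cont : ContinuousOn f₁ (Ici 0))
    (hf₂_cont : ContinuousOn f₂ (Ici 0))
    (hf_diff : ∀ x ≥ (0:ℝ), DifferentiableAt ℝ f x)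
    (hf'_cont : ContinuousOn (deriv f) (Ici 0))
    (hf_mono : MonotoneOn f (Ici 0))
    (hfE : ∀ x ≥ (0:ℝ), v * f x ≤ E)
    (hφ_diff : ∀ x ≥ (0:ℝ), DifferentiableAt ℝ φ x)
    (hφ'_cont : ContinuousOn (deriv φ) (Ici 0))
    (hφ_nonneg : ∀ x ≥ (0:ℝ), 0 ≤ φ x)
    (hφ'_nonpos : ∀ x ≥ (0:ℝ), deriv φ x ≤ 0)
    (hφ_lim : Tendsto φ atTop (𝓝 0))
    (hμ : ∀ x ≥ (0:ℝ), 0 ≤ ∫ t in (0:ℝ)..x, (f₂ t - f₁ t))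
    (hint1 : IntegrableOn (fun x => (f₂ x - f₁ x) * (v * f x - E) * φ x ^ 2) (Ioi 0))
    (hint2 : IntegrableOn
      (fun x => (v * deriv f x * φ x ^ 2 + 2 * (v * f x - E) * φ x * deriv φ x)
        * ∫ t in (0:ℝ)..x, (f₂ t - f₁ t)) (Ioi 0))
    (hlim : Tendsto
      (fun x => (v * f x - E) * φ x ^ 2 * ∫ t in (0:ℝ)..x, (f₂ t - f₁ t))
      atTop (𝓝 0)) :
    (∫ x in Ioi (0:ℝ), (f₂ x - f₁ x) * (v * f x - E) * φ x ^ 2) ≤ 0 :=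
  kleinGordon_refined_integral_ineq_1d_general v E hv f f₁ f₂ φ hf₁_cont hf₂_cont hf_diff hf_mono
    hfE hφ_diff hφ_nonneg hφ'_nonpos hμ hint1 hint2 hlim
end

section
/- Let v > 0 and E ∈ ℝ. Let f, f₁, f₂ : [0,∞) → ℝ be continuous, with f continuously differentiable and monotone non-decreasing, and v f(x) ≤ E for all x ≥ 0. Let φ, φ₁ : [0,∞) → ℝ be continuously differentiable with φ(x) ≥ 0, φ'(x) ≤ 0, and φ₁(x) ≥ 0 for all x ≥ 0, and φ(x) → 0 as x → ∞. Set ρ(x) = ∫₀^x [f₂(t) − f₁(t)] φ₁(t) dt, and assume ρ(x) ≥ 0 for all x ≥ 0, that the integrals ∫₀^∞ (f₂ − f₁)(v f − E) φ₁ φ dx and ∫₀^∞ [v f'(x) φ(x) + (v f(x) − E) φ'(x)] ρ(x) dx converge, and that (v f(x) − E) φ(x) ρ(x) → 0 as x → ∞. Then ∫₀^∞ [f₂(x) − f₁(x)] [v f(x) − E] φ₁(x) φ(x) dx ≤ 0. -/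
open MeasureTheory Filter Set
open scoped Topology

/-!
Write `g = (v f − E) φ` and `ρ(x) = ∫₀^x (f₂ − f₁) φ₁`. Since `ρ' = (f₂ − f₁) φ₁`, `ρ(0) = 0` and
`g ρ → 0` at infinity, integration by parts turns the integral into `−∫₀^∞ g' ρ`. Here
`g' = v f' φ + (v f − E) φ'` is a sum of two nonnegative terms (`f` is monotone, `φ ≥ 0`,
`v f ≤ E`, `φ' ≤ 0`), and `ρ ≥ 0`, so the integral is nonpositive.
-/

section Primitive

variable {h : ℝ → ℝ} {a : ℝ}

theorem ContinuousOn.hasDerivAt_integral_of_Ici (hh : ContinuousOn h (Ici a)) {x : ℝ}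
    (hx : a < x) : HasDerivAt (fun y => ∫ t in a..y, h t) (h x) x := by
  have hIci : Ici a ∈ 𝓝 x := Ici_mem_nhds hx
  refine intervalIntegral.integral_hasDerivAt_right ?_
    ⟨Ici a, hIci, hh.aestronglyMeasurable measurableSet_Ici⟩ (hh.continuousAt hIci)
  exact (hh.mono Icc_subset_Ici_self).intervalIntegrable_of_Icc hx.le

theorem ContinuousOn.continuousWithinAt_integral_of_Ici (hh : ContinuousOn h (Ici a)) :
    ContinuousWithinAt (fun y => ∫ t in a..y, h t) (Ici a) a := by
  have hle : a ≤ a + 1 := (lt_add_one a).le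
  have hcont : ContinuousOn (fun y => ∫ t in a..y, h t) (Icc a (a + 1)) := by
    rw [← uIcc_of_le hle]
    exact intervalIntegral.continuousOn_primitive_interval
      (uIcc_of_le hle ▸ (hh.mono Icc_subset_Ici_self).integrableOn_Icc)
  exact (hcont a (left_mem_Icc.2 hle)).mono_of_mem_nhdsWithin (Icc_mem_nhdsGE (lt_add_one a))

theorem integral_Ioi_mul_eq_neg_integral_deriv_mul_primitive {g g' : ℝ → ℝ}
    (hg : ∀ x ∈ Ioi a, HasDerivAt g (g' x) x) (hga : ContinuousWithinAt g (Ici a) a)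
    (hh : ContinuousOn h (Ici a))
    (hgh : IntegrableOn (fun x => g x * h x) (Ioi a))
    (hg'ρ : IntegrableOn (fun x => g' x * ∫ t in a..x, h t) (Ioi a))
    (hlim : Tendsto (fun x => g x * ∫ t in a..x, h t) atTop (𝓝 0)) :
    ∫ x in Ioi a, g x * h x = -∫ x in Ioi a, g' x * ∫ t in a..x, h t := by
  have h_zero : Tendsto (g * fun x => ∫ t in a..x, h t) (𝓝[>] a) (𝓝 0) := by
    simpa only [Pi.mul_apply, intervalIntegral.integral_same, mul_zero] using
      ((hga.mul hh.continuousWithinAt_integral_of_Ici).mono Ioi_subset_Ici_self).tendsto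
  simpa using integral_Ioi_mul_deriv_eq_deriv_mul hg
    (fun x hx => hh.hasDerivAt_integral_of_Ici hx) hgh hg'ρ h_zero hlim

end Primitive

theorem kleinGordon_refined_integral_ineq_1d_strong_general
    (v E : ℝ) (hv : 0 < v)
    (f f₁ f₂ φ φ₁ : ℝ → ℝ)
    (hf₁_cont : ContinuousOn f₁ (Ici 0))
    (hf₂_cont : ContinuousOn f₂ (Ici 0))
    (hf_diff : ∀ x ≥ (0:ℝ), DifferentiableAt ℝ f x)
    (hf_mono : MonotoneOn f (Ici 0))
    (hfE : ∀ x ≥ (0:ℝ), v * f x ≤ E)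
    (hφ_diff : ∀ x ≥ (0:ℝ), DifferentiableAt ℝ φ x)
    (hφ₁_diff : ∀ x ≥ (0:ℝ), DifferentiableAt ℝ φ₁ x)
    (hφ_nonneg : ∀ x ≥ (0:ℝ), 0 ≤ φ x)
    (hφ'_nonpos : ∀ x ≥ (0:ℝ), deriv φ x ≤ 0)
    (hρ : ∀ x ≥ (0:ℝ), 0 ≤ ∫ t in (0:ℝ)..x, (f₂ t - f₁ t) * φ₁ t)
    (hint1 : IntegrableOn
      (fun x => (f₂ x - f₁ x) * (v * f x - E) * φ₁ x * φ x) (Ioi 0))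
    (hint2 : IntegrableOn
      (fun x => (v * deriv f x * φ x + (v * f x - E) * deriv φ x)
        * ∫ t in (0:ℝ)..x, (f₂ t - f₁ t) * φ₁ t) (Ioi 0))
    (hlim : Tendsto
      (fun x => (v * f x - E) * φ x * ∫ t in (0:ℝ)..x, (f₂ t - f₁ t) * φ₁ t)
      atTop (𝓝 0)) :
    (∫ x in Ioi (0:ℝ), (f₂ x - f₁ x) * (v * f x - E) * φ₁ x * φ x) ≤ 0 := by
  have hφ₁_cont : ContinuousOn φ₁ (Ici 0) := fun x hx =>
    (hφ₁_diff x hx).continuousAt.continuousWithinAt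
  have hg : ∀ x ∈ Ioi (0:ℝ), HasDerivAt (fun x => (v * f x - E) * φ x)
      (v * deriv f x * φ x + (v * f x - E) * deriv φ x) x := fun x hx =>
    (((hf_diff x hx.le).hasDerivAt.const_mul v).sub_const E).mul (hφ_diff x hx.le).hasDerivAt
  have hg0 : ContinuousWithinAt (fun x => (v * f x - E) * φ x) (Ici 0) 0 :=
    ((((hf_diff 0 le_rfl).continuousAt.const_mul v).sub continuousAt_const).mul
      (hφ_diff 0 le_rfl).continuousAt).continuousWithinAt
  have hf'_nonneg : ∀ x ∈ Ioi (0:ℝ), 0 ≤ deriv f x := fun x hx => by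
    simpa only [derivWithin_of_isOpen isOpen_Ioi hx] using
      (hf_mono.mono Ioi_subset_Ici_self).derivWithin_nonneg (x := x)
  have hreshape : (fun x => (f₂ x - f₁ x) * (v * f x - E) * φ₁ x * φ x)
      = fun x => (v * f x - E) * φ x * ((f₂ x - f₁ x) * φ₁ x) := by
    ext x; ring
  rw [hreshape] at hint1 ⊢
  rw [integral_Ioi_mul_eq_neg_integral_deriv_mul_primitive (h := fun x => (f₂ x - f₁ x) * φ₁ x)
    hg hg0 ((hf₂_cont.sub hf₁_cont).mul hφ₁_cont) hint1 hint2 hlim, neg_nonpos]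
  refine setIntegral_nonneg measurableSet_Ioi fun x hx => mul_nonneg (add_nonneg ?_ ?_) (hρ x hx.le)
  · exact mul_nonneg (mul_nonneg hv.le (hf'_nonneg x hx)) (hφ_nonneg x hx.le)
  · exact mul_nonneg_of_nonpos_of_nonpos (sub_nonpos.2 (hfE x hx.le)) (hφ'_nonpos x hx.le)

/-- key integral inequality of the stronger one-dimensional refined
comparison theorem: if `ρ(x) = ∫₀^x (f₂ − f₁) φ₁ ≥ 0` for all `x ≥ 0`, then
`∫₀^∞ (f₂ − f₁)(v f − E) φ₁ φ dx ≤ 0`. -/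
theorem kleinGordon_refined_integral_ineq_1d_strong
    (v E : ℝ) (hv : 0 < v)
    (f f₁ f₂ φ φ₁ : ℝ → ℝ)
    (hf_cont : ContinuousOn f (Ici 0))
    (hf₁_cont : ContinuousOn f₁ (Ici 0))
    (hf₂_cont : ContinuousOn f₂ (Ici 0))
    (hf_diff : ∀ x ≥ (0:ℝ), DifferentiableAt ℝ f x)
    (hf'_cont : ContinuousOn (deriv f) (Ici 0))
    (hf_mono : MonotoneOn f (Ici 0))
    (hfE : ∀ x ≥ (0:ℝ), v * f x ≤ E)
    (hφ_diff : ∀ x ≥ (0:ℝ), DifferentiableAt ℝ φ x)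
    (hφ'_cont : ContinuousOn (deriv φ) (Ici 0))
    (hφ₁_diff : ∀ x ≥ (0:ℝ), DifferentiableAt ℝ φ₁ x)
    (hφ₁'_cont : ContinuousOn (deriv φ₁) (Ici 0))
    (hφ_nonneg : ∀ x ≥ (0:ℝ), 0 ≤ φ x)
    (hφ'_nonpos : ∀ x ≥ (0:ℝ), deriv φ x ≤ 0)
    (hφ₁_nonneg : ∀ x ≥ (0:ℝ), 0 ≤ φ₁ x)
    (hφ_lim : Tendsto φ atTop (𝓝 0))
    (hρ : ∀ x ≥ (0:ℝ), 0 ≤ ∫ t in (0:ℝ)..x, (f₂ t - f₁ t) * φ₁ t)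
    (hint1 : IntegrableOn
      (fun x => (f₂ x - f₁ x) * (v * f x - E) * φ₁ x * φ x) (Ioi 0))
    (hint2 : IntegrableOn
      (fun x => (v * deriv f x * φ x + (v * f x - E) * deriv φ x)
        * ∫ t in (0:ℝ)..x, (f₂ t - f₁ t) * φ₁ t) (Ioi 0))
    (hlim : Tendsto
      (fun x => (v * f x - E) * φ x * ∫ t in (0:ℝ)..x, (f₂ t - f₁ t) * φ₁ t)
      atTop (𝓝 0)) :
    (∫ x in Ioi (0:ℝ), (f₂ x - f₁ x) * (v * f x - E) * φ₁ x * φ x) ≤ 0 :=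
  kleinGordon_refined_integral_ineq_1d_strong_general v E hv f f₁ f₂ φ φ₁ hf₁_cont hf₂_cont hf_diff
    hf_mono hfE hφ_diff hφ₁_diff hφ_nonneg hφ'_nonpos hρ hint1 hint2 hlim
end
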